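/- Let p > 2 and ω > 0, and let φ_ω(x) = (ωp/(2cosh²(((p−2)/2)√ω x)))^{1/(p−2)}. Then φ_ω is smooth and positive on ℝ, satisfies φ_ω′(x) = −√ω tanh(((p−2)/2)√ω x) φ_ω(x) for all x ∈ ℝ, and solves −φ_ω″ + ωφ_ω − φ_ω^{p−1} = 0 on ℝ. -/

import Mathlib

noncomputable section

/-- The NLS soliton at frequency `ω` for nonlinearity power `p`:
`φ_ω(x) = (ωp / (2 cosh²(((p−2)/2)√ω x)))^{1/(p−2)}`. -/
def soliton (p ω : ℝ) (x : ℝ) : ℝ :=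
  (ω * p / (2 * Real.cosh ((p - 2) / 2 * Real.sqrt ω * x) ^ 2)) ^ (1 / (p - 2))

/-- for p > 2 and ω > 0 the soliton `φ_ω` is smooth and positive, its
derivative is `φ_ω′(x) = −√ω tanh(((p−2)/2)√ω x) φ_ω(x)`, and it solves
`−φ_ω″ + ωφ_ω − φ_ω^{p−1} = 0` on ℝ. -/
theorem soliton_properties (p ω : ℝ) (hp : 2 < p) (hω : 0 < ω) :
    (∀ x : ℝ, 0 < soliton p ω x) ∧
    ContDiff ℝ (⊤ : ℕ∞) (soliton p ω) ∧
    (∀ x : ℝ, HasDerivAt (soliton p ω)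
      (-Real.sqrt ω * Real.tanh ((p - 2) / 2 * Real.sqrt ω * x) * soliton p ω x) x) ∧
    (∀ x : ℝ,
      -deriv (deriv (soliton p ω)) x + ω * soliton p ω x - soliton p ω x ^ (p - 1) = 0) := by
  have hp2 : (0:ℝ) < p - 2 := by linarith
  have hp0 : (0:ℝ) < p := by linarith
  have hsq : 0 < Real.sqrt ω := Real.sqrt_pos.mpr hω
  have hss : Real.sqrt ω * Real.sqrt ω = ω := Real.mul_self_sqrt hω.le
  set c : ℝ := (p - 2) / 2 * Real.sqrt ω with hc
  have hch : ∀ x : ℝ, 0 < Real.cosh (c * x) := fun x => Real.cosh_pos _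
  have hpos : ∀ x : ℝ, 0 < ω * p / (2 * Real.cosh (c * x) ^ 2) := by
    intro x
    exact div_pos (by positivity) (by positivity)
  have hsol : ∀ x, soliton p ω x = (ω * p / (2 * Real.cosh (c * x) ^ 2)) ^ (1/(p-2)) :=
    fun x => rfl
  -- positivity
  have hposol : ∀ x : ℝ, 0 < soliton p ω x := fun x =>
    Real.rpow_pos_of_pos (hpos x) _
  -- derivative of cosh (c x) and sinh (c x)
  have hg : ∀ x : ℝ, HasDerivAt (fun y => Real.cosh (c * y)) (Real.sinh (c * x) * c) x := by
    intro x
    have := (Real.hasDerivAt_cosh (c * x)).comp x ((hasDerivAt_id x).const_mul c)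
    simpa [Function.comp_def] using this
  have hsinh : ∀ x : ℝ, HasDerivAt (fun y => Real.sinh (c * y)) (Real.cosh (c * x) * c) x := by
    intro x
    have := (Real.hasDerivAt_sinh (c * x)).comp x ((hasDerivAt_id x).const_mul c)
    simpa [Function.comp_def] using this
  -- derivative of h
  have hh : ∀ x : ℝ, HasDerivAt (fun y => ω * p / (2 * Real.cosh (c * y) ^ 2))
      (-(ω * p * c) * Real.sinh (c * x) / Real.cosh (c * x) ^ 3) x := by
    intro x
    have h0 := (hasDerivAt_const x (ω * p)).div (((hg x).pow 2).const_mul 2)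
      (mul_pos two_pos (pow_pos (hch x) 2)).ne'
    refine h0.congr_deriv (Eq.symm ?_)
    have h1 := (hch x).ne'
    simp only [Pi.pow_apply]
    field_simp
    ring
  -- derivative of soliton
  have hder : ∀ x : ℝ, HasDerivAt (soliton p ω)
      (-Real.sqrt ω * Real.tanh (c * x) * soliton p ω x) x := by
    intro x
    have key := (hh x).rpow_const (p := 1/(p-2)) (Or.inl (hpos x).ne')
    have hfun : (fun y => (ω * p / (2 * Real.cosh (c * y) ^ 2)) ^ (1/(p-2))) = soliton p ω :=
      funext fun y => (hsol y).symm
    rw [hfun] at key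
    convert key using 1
    rw [Real.tanh_eq_sinh_div_cosh, hsol x, Real.rpow_sub_one (hpos x).ne']
    have h1 := (hch x).ne'
    rw [hc]
    field_simp
  -- smoothness
  have hcont : ContDiff ℝ (⊤ : ℕ∞) (soliton p ω) := by
    rw [contDiff_iff_contDiffAt]
    intro x
    have h1 : ContDiffAt ℝ (⊤ : ℕ∞) (fun y => ω * p / (2 * Real.cosh (c * y) ^ 2)) x := by
      apply ContDiffAt.div
      · exact contDiffAt_const
      · exact (contDiff_const.mul
          ((Real.contDiff_cosh.comp (contDiff_const.mul contDiff_id)).pow 2)).contDiffAt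
      · positivity
    have := h1.rpow_const_of_ne (p := 1/(p-2)) (hpos x).ne'
    exact this.congr_of_eventuallyEq (Filter.Eventually.of_forall fun y => hsol y)
  refine ⟨hposol, hcont, hder, ?_⟩
  -- the ODE
  have hderiv1 : deriv (soliton p ω) = fun x => -Real.sqrt ω * Real.tanh (c * x) * soliton p ω x :=
    funext fun x => (hder x).deriv
  have htanh : ∀ x : ℝ, HasDerivAt (fun y => Real.tanh (c * y)) (c / Real.cosh (c * x) ^ 2) x := by
    intro x
    have h0 := (hsinh x).div (hg x) (hch x).ne'
    have hfun : ((fun y => Real.sinh (c * y)) / (fun y => Real.cosh (c * y)))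
        = fun y => Real.tanh (c * y) :=
      funext fun y => (Real.tanh_eq_sinh_div_cosh (c * y)).symm
    rw [hfun] at h0
    refine h0.congr_deriv (Eq.symm ?_)
    have h1 := (hch x).ne'
    have h2 : Real.cosh (c * x) ^ 2 - Real.sinh (c * x) ^ 2 = 1 :=
      Real.cosh_sq_sub_sinh_sq (c * x)
    field_simp
    linear_combination (-c) * h2
  have hder2 : ∀ x : ℝ, HasDerivAt (deriv (soliton p ω))
      (-Real.sqrt ω * (c / Real.cosh (c * x) ^ 2 * soliton p ω x
        + Real.tanh (c * x) * (-Real.sqrt ω * Real.tanh (c * x) * soliton p ω x))) x := by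
    intro x
    rw [hderiv1]
    have := ((htanh x).mul (hder x)).const_mul (-Real.sqrt ω)
    simpa [mul_assoc] using this
  intro x
  rw [(hder2 x).deriv]
  have hpow : soliton p ω x ^ (p - 1)
      = ω * p / (2 * Real.cosh (c * x) ^ 2) * soliton p ω x := by
    rw [hsol x, ← Real.rpow_mul (hpos x).le]
    have he : 1 / (p - 2) * (p - 1) = 1 + 1 / (p - 2) := by
      field_simp
      ring
    rw [he, Real.rpow_add (hpos x), Real.rpow_one]
  rw [hpow, Real.tanh_eq_sinh_div_cosh]
  have h1 := (hch x).ne'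
  have h2 : Real.sinh (c * x) ^ 2 = Real.cosh (c * x) ^ 2 - 1 := Real.sinh_sq (c * x)
  have hc2 : Real.sqrt ω * c = (p - 2) / 2 * ω := by rw [hc]; ring_nf; rw [Real.sq_sqrt hω.le]; ring
  field_simp
  linear_combination (soliton p ω x * (-2 + p - 2 * Real.sinh (c * x) ^ 2)) * Real.sq_sqrt hω.le
    - (2 * ω * soliton p ω x) * h2

end
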